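/- A monetary functional ρ on L^∞ is cash-super-additive (ρ(X + m) ≥ ρ(X) + m for all constants m ≥ 0) if and only if the induced return functional ρ̃(X) := exp(ρ(ln X)) is star-shaped: ρ̃(cX) ≤ c·ρ̃(X) for all constants c ∈ (0,1]. -/
import Mathlib


open MeasureTheory

/-- A monotone monetary functional `ρ` on `L^∞` is cash-super-additive iff the induced
return functional `ρ̃ X = exp (ρ (ln X))` on `𝓛^∞` is star-shaped. -/
theorem cashSuperAdditive_iff_starShaped {Ω : Type*} [MeasurableSpace Ω]
    (μ : Measure Ω) [IsProbabilityMeasure μ] (ρ : (Ω → ℝ) → ℝ)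
    (hmono : ∀ X Y : Ω → ℝ, (∀ᵐ ω ∂μ, X ω ≤ Y ω) → ρ X ≤ ρ Y) :
    (∀ X : Ω → ℝ, (∃ C : ℝ, ∀ᵐ ω ∂μ, |X ω| ≤ C) → ∀ m : ℝ, 0 ≤ m →
      ρ X + m ≤ ρ (fun ω => X ω + m))
    ↔
    (∀ X : Ω → ℝ,
      (∃ ε > 0, ∀ᵐ ω ∂μ, ε ≤ X ω) → (∃ C : ℝ, ∀ᵐ ω ∂μ, |X ω| ≤ C) →
      ∀ c : ℝ, 0 < c → c ≤ 1 →
      Real.exp (ρ (fun ω => Real.log (c * X ω))) ≤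
        c * Real.exp (ρ (fun ω => Real.log (X ω)))) := by
  have hcongr : ∀ X Y : Ω → ℝ, (∀ᵐ ω ∂μ, X ω = Y ω) → ρ X = ρ Y := by
    intro X Y h
    exact le_antisymm (hmono X Y (h.mono fun ω hω => hω.le))
      (hmono Y X (h.mono fun ω hω => hω.ge))
  constructor
  · intro h X hε hC c hc hc1
    obtain ⟨ε, hεpos, hXε⟩ := hε
    obtain ⟨C, hXC⟩ := hC
    set Y : Ω → ℝ := fun ω => Real.log (c * X ω) with hY
    have hεC : ε ≤ C := by
      obtain ⟨ω, h1, h2⟩ := (hXε.and hXC).exists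
      exact h1.trans ((le_abs_self _).trans h2)
    have hcC : 0 < c * C := mul_pos hc (hεpos.trans_le hεC)
    -- boundedness of Y
    have hYb : ∃ C' : ℝ, ∀ᵐ ω ∂μ, |Y ω| ≤ C' := by
      refine ⟨max |Real.log (c * ε)| |Real.log (c * C)|, ?_⟩
      filter_upwards [hXε, hXC] with ω h1 h2
      have hx : 0 < X ω := hεpos.trans_le h1
      have hl : Real.log (c * ε) ≤ Y ω :=
        Real.log_le_log (mul_pos hc hεpos) (by nlinarith)
      have hu : Y ω ≤ Real.log (c * C) := by
        have : c * X ω ≤ c * C := by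
          have := (le_abs_self (X ω)).trans h2
          nlinarith
        exact Real.log_le_log (mul_pos hc hx) this
      rw [abs_le]
      constructor
      · calc -(max |Real.log (c * ε)| |Real.log (c * C)|) ≤ -|Real.log (c * ε)| := by
              simp [le_max_left]
          _ ≤ Real.log (c * ε) := neg_abs_le _
          _ ≤ Y ω := hl
      · exact hu.trans ((le_abs_self _).trans (le_max_right _ _))
    have hm : (0:ℝ) ≤ -Real.log c := neg_nonneg.mpr (Real.log_nonpos hc.le hc1)
    have key := h Y hYb (-Real.log c) hm
    have heq : ρ (fun ω => Y ω + -Real.log c) = ρ (fun ω => Real.log (X ω)) := by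
      apply hcongr
      filter_upwards [hXε] with ω h1
      have hx : X ω ≠ 0 := (hεpos.trans_le h1).ne'
      rw [hY]
      simp only
      rw [Real.log_mul hc.ne' hx]
      ring
    rw [heq] at key
    have : ρ Y ≤ ρ (fun ω => Real.log (X ω)) + Real.log c := by linarith
    calc Real.exp (ρ Y) ≤ Real.exp (ρ (fun ω => Real.log (X ω)) + Real.log c) :=
          Real.exp_le_exp.mpr this
      _ = c * Real.exp (ρ (fun ω => Real.log (X ω))) := by
          rw [Real.exp_add, Real.exp_log hc]; ring
  · intro h X hC m hm
    obtain ⟨C, hXC⟩ := hC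
    set Z : Ω → ℝ := fun ω => Real.exp (X ω + m) with hZ
    have hstar := h Z ⟨Real.exp (-C + m), Real.exp_pos _, by
        filter_upwards [hXC] with ω h2
        exact Real.exp_le_exp.mpr (by have := neg_abs_le (X ω); linarith)⟩
      ⟨Real.exp (C + m), by
        filter_upwards [hXC] with ω h2
        rw [abs_of_pos (Real.exp_pos _)]
        exact Real.exp_le_exp.mpr (by have := le_abs_self (X ω); linarith)⟩
      (Real.exp (-m)) (Real.exp_pos _) (Real.exp_le_one_iff.mpr (by linarith))
    have h1 : (fun ω => Real.log (Real.exp (-m) * Z ω)) = X := by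
      funext ω
      rw [hZ]
      simp only
      rw [Real.log_mul (Real.exp_ne_zero _) (Real.exp_ne_zero _),
        Real.log_exp, Real.log_exp]
      ring
    have h2 : (fun ω => Real.log (Z ω)) = fun ω => X ω + m := by
      funext ω; rw [hZ]; simp [Real.log_exp]
    rw [h1, h2] at hstar
    have := Real.exp_le_exp.mp (by
      calc Real.exp (ρ X + m) = Real.exp (ρ X) * Real.exp m := Real.exp_add _ _
        _ ≤ (Real.exp (-m) * Real.exp (ρ fun ω => X ω + m)) * Real.exp m := by
            exact mul_le_mul_of_nonneg_right hstar (Real.exp_pos m).le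
        _ = Real.exp (ρ fun ω => X ω + m) := by
            rw [← Real.exp_add]; simp [mul_comm, mul_assoc, ← Real.exp_add]
      )
    exact this
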